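/- arXiv:1612.02937 — 2 statements merged into one kernel-verified Lean document; each statement's English description precedes it below -/
import Mathlib

section
/- For every real m ≥ 1, the function f(x) = x/(|x - m² + 1| + 2m) defined for x > 0 satisfies f(x) ≤ m for all x > 0. Consequently sup_{x>0} x/(|x - m²+1| + 2m) ≤ m. -/
theorem sup_ratio_le (m : ℝ) (hm : 1 ≤ m) :
    (∀ x : ℝ, 0 < x → x / (|x - m ^ 2 + 1| + 2 * m) ≤ m) ∧
    (⨆ x : {x : ℝ // 0 < x}, (x : ℝ) / (|(x : ℝ) - m ^ 2 + 1| + 2 * m)) ≤ m := by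
  have key : ∀ x : ℝ, 0 < x → x / (|x - m ^ 2 + 1| + 2 * m) ≤ m := by
    intro x hx
    have hd : 0 < |x - m ^ 2 + 1| + 2 * m := by positivity
    rw [div_le_iff₀ hd]
    rcases abs_cases (x - m ^ 2 + 1) with ⟨h1, h2⟩ | ⟨h1, h2⟩ <;> nlinarith
  refine ⟨key, ?_⟩
  have : Nonempty {x : ℝ // 0 < x} := ⟨⟨1, one_pos⟩⟩
  exact ciSup_le fun x => key x x.2
end

section
/- Define D_s := ℂ \ {λ : Re λ ≥ (s/2)(Im λ)² - 1} for s > 0. Then there exists c > 0 (depending on s) such that for all λ ∈ D_s and all real μ ≥ 1, |μ - λ| ≥ c·μ^{1/2}. -/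
/-!
A point `λ` with `Re λ ≤ μ / 2` is at distance at least `μ / 2 ≥ √μ / 2` from `μ`. Otherwise
`μ < 2 Re λ < s (Im λ)²`, so `|Im λ| > √(μ / s)` bounds the distance.
-/

namespace Complex

lemma half_mul_sqrt_le_norm_ofReal_sub {μ : ℝ} {z : ℂ} (hμ : 1 ≤ μ) (hz : z.re ≤ μ / 2) :
    1 / 2 * √μ ≤ ‖(μ : ℂ) - z‖ :=
  calc 1 / 2 * √μ ≤ μ / 2 := by linarith [Real.sqrt_le_self_iff.mpr (Or.inr hμ)]
    _ ≤ ((μ : ℂ) - z).re := by simp only [sub_re, ofReal_re]; linarith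
    _ ≤ ‖(μ : ℂ) - z‖ := re_le_norm _

lemma inv_sqrt_mul_sqrt_le_norm_ofReal_sub {s μ : ℝ} {z : ℂ} (hs : 0 < s)
    (hz : μ ≤ s * z.im ^ 2) : (√s)⁻¹ * √μ ≤ ‖(μ : ℂ) - z‖ := by
  have hsqrt : √μ ≤ √s * |z.im| := by
    simpa only [Real.sqrt_mul hs.le, Real.sqrt_sq_eq_abs] using Real.sqrt_le_sqrt hz
  calc (√s)⁻¹ * √μ ≤ |z.im| := by
        rw [inv_mul_le_iff₀ (Real.sqrt_pos.mpr hs)]; exact hsqrt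
    _ = |((μ : ℂ) - z).im| := by simp
    _ ≤ ‖(μ : ℂ) - z‖ := abs_im_le_norm _

end Complex

theorem region_distance_bound (s : ℝ) (hs : 0 < s) :
    ∃ c > (0 : ℝ), ∀ lam : ℂ, lam.re < s / 2 * lam.im ^ 2 - 1 →
      ∀ μ : ℝ, 1 ≤ μ → c * Real.sqrt μ ≤ ‖(μ : ℂ) - lam‖ := by
  refine ⟨min (1 / 2) (√s)⁻¹, by positivity, fun lam hlam μ hμ => ?_⟩
  rcases le_or_gt lam.re (μ / 2) with hre | hre
  · exact (mul_le_mul_of_nonneg_right (min_le_left _ _) (Real.sqrt_nonneg μ)).trans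
      (Complex.half_mul_sqrt_le_norm_ofReal_sub hμ hre)
  · have hμ_le : μ ≤ s * lam.im ^ 2 := by linarith
    exact (mul_le_mul_of_nonneg_right (min_le_right _ _) (Real.sqrt_nonneg μ)).trans
      (Complex.inv_sqrt_mul_sqrt_le_norm_ofReal_sub hs hμ_le)
end
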